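/- arXiv:2209.08621 — 2 statements merged into one kernel-verified Lean document; each statement's English description precedes it below -/
import Mathlib

section
/- Let ν be an atomless probability measure on a measurable space Ω. Then there exists a family of measurable sets D_{n,k} ⊆ Ω, for n ∈ ℕ and 1 ≤ k ≤ 2^n, such that: (i) for each n, the sets D_{n,1}, …, D_{n,2^n} are pairwise disjoint and their union is Ω; (ii) ν(D_{n,k}) = 2^{-n} for every n and k; and (iii) each partition refines the previous one, namely D_{n,k} = D_{n+1, 2k-1} ∪ D_{n+1, 2k} for all n and all 1 ≤ k ≤ 2^n. -/
/-!
Sierpiński: an atomless measure takes every value in `[0, ν A]` on measurable subsets of a set `A`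
of finite measure. Build `U ⊆ A` greedily, each step adding a piece of at least half the largest
measure that still fits under `r`; in the limit no non-null set fits into the gap `r - ν U`, while
atomlessness provides non-null sets of arbitrarily small measure, so `ν U = r`. Splitting every
piece of the `n`-th partition into two halves of equal measure then gives the `(n + 1)`-st.
-/

open MeasureTheory Set
open scoped ENNReal

theorem ENNReal.exists_mem_forall_le_two_mul {α : Type*} {s : Set α} (hs : s.Nonempty)
    {f : α → ℝ≥0∞} {c : ℝ≥0∞} (hc : c ≠ ∞) (hf : ∀ x ∈ s, f x ≤ c) :
    ∃ x ∈ s, ∀ y ∈ s, f y ≤ 2 * f x := by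
  set M := ⨆ x ∈ s, f x
  have hfM : ∀ y ∈ s, f y ≤ M := fun y hy => le_biSup f hy
  rcases eq_or_ne M 0 with hM | hM
  · obtain ⟨x, hx⟩ := hs
    exact ⟨x, hx, fun y hy => (hfM y hy).trans (hM ▸ zero_le)⟩
  have hM_top : M ≠ ∞ := ne_top_of_le_ne_top hc (iSup₂_le hf)
  obtain ⟨x, hx, hMx⟩ := lt_biSup_iff.1 (ENNReal.half_lt_self hM hM_top)
  refine ⟨x, hx, fun y hy => (hfM y hy).trans ?_⟩
  calc M = 2 * (M / 2) := (ENNReal.mul_div_cancel two_ne_zero ENNReal.ofNat_ne_top).symm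
    _ ≤ 2 * f x := by gcongr

section

variable {Ω : Type*} [MeasurableSpace Ω] {ν : Measure Ω}

def IsAtomless (ν : Measure Ω) : Prop :=
  ∀ A : Set Ω, MeasurableSet A → 0 < ν A → ∃ B ⊆ A, MeasurableSet B ∧ 0 < ν B ∧ ν B < ν A

theorem exists_saturated_subset_measure_le {A : Set Ω} (hA : ν A ≠ ∞) (r : ℝ≥0∞) :
    ∃ U ⊆ A, MeasurableSet U ∧ ν U ≤ r ∧
      ∀ C ⊆ A \ U, MeasurableSet C → ν C ≤ r - ν U → ν C = 0 := by
  let S : Set Ω → Set (Set Ω) := fun B => {C | C ⊆ A \ B ∧ MeasurableSet C ∧ ν C ≤ r - ν B}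
  have hS : ∀ B, ∃ C ∈ S B, ∀ C' ∈ S B, ν C' ≤ 2 * ν C := fun B =>
    ENNReal.exists_mem_forall_le_two_mul ⟨∅, by simp [S]⟩ hA
      fun C hC => measure_mono (hC.1.trans sdiff_subset)
  choose next hnext hnext_max using hS
  let B : ℕ → Set Ω := fun n => Nat.rec ∅ (fun _ X => X ∪ next X) n
  have hB : ∀ n, B n ⊆ A ∧ MeasurableSet (B n) ∧ ν (B n) ≤ r := by
    intro n
    induction n with
    | zero => simp [B]
    | succ n ih =>
      obtain ⟨hBA, hBm, hBr⟩ := ih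
      obtain ⟨hCA, hCm, hCr⟩ := hnext (B n)
      refine ⟨union_subset hBA (hCA.trans sdiff_subset), hBm.union hCm, ?_⟩
      calc ν (B n ∪ next (B n)) ≤ ν (B n) + ν (next (B n)) := measure_union_le _ _
        _ ≤ ν (B n) + (r - ν (B n)) := by gcongr
        _ = r := add_tsub_cancel_of_le hBr
  have hB_mono : Monotone B := monotone_nat_of_le_succ fun n => subset_union_left
  have hB_succ : ∀ n, ν (B (n + 1)) = ν (B n) + ν (next (B n)) := fun n =>
    measure_union (disjoint_of_subset_right (hnext (B n)).1 disjoint_sdiff_right) (hnext _).2.1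
  refine ⟨⋃ n, B n, iUnion_subset fun n => (hB n).1, .iUnion fun n => (hB n).2.1, ?_, ?_⟩
  · rw [hB_mono.measure_iUnion]
    exact iSup_le fun n => (hB n).2.2
  intro C hC hCm hCr
  by_contra hC0
  -- `C` fits at every stage, so each greedy step adds at least `ν C / 2`.
  have hC_le : ∀ n, ν C ≤ 2 * ν (next (B n)) := fun n =>
    hnext_max (B n) C ⟨hC.trans (sdiff_subset_sdiff_right (subset_iUnion B n)), hCm,
      hCr.trans (tsub_le_tsub_left (measure_mono (subset_iUnion B n)) r)⟩
  have hgrow : ∀ n : ℕ, n * ν C ≤ 2 * ν (B n) := by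
    intro n
    induction n with
    | zero => simp
    | succ n ih =>
      rw [hB_succ, mul_add, Nat.cast_succ, add_mul, one_mul]
      exact add_le_add ih (hC_le n)
  obtain ⟨n, hn⟩ := ENNReal.exists_nat_mul_gt hC0 (by finiteness : 2 * ν A ≠ ∞)
  exact (hn.trans_le (hgrow n)).not_ge (by gcongr; exact (hB n).1)

namespace IsAtomless

variable {A : Set Ω}

theorem exists_subset_pos_two_mul_le (h : IsAtomless ν) (hA : MeasurableSet A) (hA0 : 0 < ν A)
    (hA_top : ν A ≠ ∞) :
    ∃ B ⊆ A, MeasurableSet B ∧ 0 < ν B ∧ 2 * ν B ≤ ν A := by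
  obtain ⟨B, hBA, hB, hB0, hB_lt⟩ := h A hA hA0
  have hsplit : ν B + ν (A \ B) = ν A := by
    rw [measure_add_sdiff hB.nullMeasurableSet, union_eq_self_of_subset_left hBA]
  rcases le_total (2 * ν B) (ν A) with hle | hle
  · exact ⟨B, hBA, hB, hB0, hle⟩
  have hB_top : ν B ≠ ∞ := ne_top_of_le_ne_top hA_top (measure_mono hBA)
  have hcompl_le : ν (A \ B) ≤ ν B :=
    (ENNReal.add_le_add_iff_left hB_top).1 (by rwa [hsplit, ← two_mul])
  refine ⟨A \ B, sdiff_subset, hA.diff hB, pos_iff_ne_zero.2 fun h0 => ?_, ?_⟩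
  · rw [h0, add_zero] at hsplit
    exact hB_lt.ne hsplit
  · calc 2 * ν (A \ B) = ν (A \ B) + ν (A \ B) := two_mul _
      _ ≤ ν B + ν (A \ B) := by gcongr
      _ = ν A := hsplit

theorem exists_subset_pos_lt (h : IsAtomless ν) (hA : MeasurableSet A) (hA0 : 0 < ν A)
    (hA_top : ν A ≠ ∞) {ε : ℝ≥0∞} (hε : ε ≠ 0) : ∃ B ⊆ A, MeasurableSet B ∧ 0 < ν B ∧ ν B < ε := by
  have shrink : ∀ n : ℕ, ∃ B ⊆ A, MeasurableSet B ∧ 0 < ν B ∧ 2 ^ n * ν B ≤ ν A := by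
    intro n
    induction n with
    | zero => exact ⟨A, subset_rfl, hA, hA0, by simp⟩
    | succ n ih =>
      obtain ⟨B, hBA, hB, hB0, hB_le⟩ := ih
      obtain ⟨C, hCB, hC, hC0, hC_le⟩ := h.exists_subset_pos_two_mul_le hB hB0
        (ne_top_of_le_ne_top hA_top (measure_mono hBA))
      refine ⟨C, hCB.trans hBA, hC, hC0, ?_⟩
      calc 2 ^ (n + 1) * ν C = 2 ^ n * (2 * ν C) := by ring
        _ ≤ 2 ^ n * ν B := by gcongr
        _ ≤ ν A := hB_le
  obtain ⟨n, hn⟩ := ENNReal.exists_nat_mul_gt hε hA_top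
  obtain ⟨B, hBA, hB, hB0, hB_le⟩ := shrink n
  refine ⟨B, hBA, hB, hB0, ?_⟩
  refine lt_of_mul_lt_mul_left' (a := (2 : ℝ≥0∞) ^ n) (hB_le.trans_lt (hn.trans_le ?_))
  gcongr
  exact_mod_cast Nat.lt_two_pow_self.le

theorem exists_subset_measure_eq (h : IsAtomless ν) (hA : MeasurableSet A) (hA_top : ν A ≠ ∞)
    {r : ℝ≥0∞} (hr : r ≤ ν A) : ∃ B ⊆ A, MeasurableSet B ∧ ν B = r := by
  obtain ⟨U, hUA, hU, hUr, hU_sat⟩ := exists_saturated_subset_measure_le hA_top r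
  refine ⟨U, hUA, hU, hUr.antisymm (not_lt.1 fun hlt => ?_)⟩
  have hgap : 0 < ν (A \ U) :=
    (tsub_pos_of_lt (hlt.trans_le hr)).trans_le le_measure_sdiff
  obtain ⟨C, hC, hCm, hC0, hCr⟩ := h.exists_subset_pos_lt (hA.diff hU) hgap
    (ne_top_of_le_ne_top hA_top (measure_mono sdiff_subset)) (tsub_pos_of_lt hlt).ne'
  exact hC0.ne' (hU_sat C hC hCm hCr.le)

end IsAtomless

structure Halving (ν : Measure Ω) where
  half : Set Ω → Set Ω
  half_subset : ∀ A, half A ⊆ A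
  measurableSet_half : ∀ A, MeasurableSet A → MeasurableSet (half A)
  measure_half : ∀ A, MeasurableSet A → ν (half A) = ν A / 2

theorem IsAtomless.nonempty_halving [IsFiniteMeasure ν] (h : IsAtomless ν) :
    Nonempty (Halving ν) := by
  have : ∀ A : Set Ω, ∃ B ⊆ A, MeasurableSet A → MeasurableSet B ∧ ν B = ν A / 2 := by
    intro A
    by_cases hA : MeasurableSet A
    · obtain ⟨B, hBA, hB, hνB⟩ :=
        h.exists_subset_measure_eq hA (measure_ne_top ν A) ENNReal.half_le_self
      exact ⟨B, hBA, fun _ => ⟨hB, hνB⟩⟩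
    · exact ⟨∅, empty_subset A, fun hA' => absurd hA' hA⟩
  choose half half_subset hhalf using this
  exact ⟨⟨half, half_subset, fun A hA => (hhalf A hA).1, fun A hA => (hhalf A hA).2⟩⟩

namespace Halving

variable (H : Halving ν)

/-- Piece `k` of level `n + 1` is the half (`k` odd) or the rest (`k` even) of piece `(k + 1) / 2`
of level `n`; only the indices `1 ≤ k ≤ 2 ^ n` of level `n` form a partition. -/
def partition : ℕ → ℕ → Set Ω
  | 0, _ => univ
  | n + 1, k =>
    if Odd k then H.half (partition n ((k + 1) / 2))
    else partition n ((k + 1) / 2) \ H.half (partition n ((k + 1) / 2))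

theorem partition_succ_subset (n k : ℕ) :
    H.partition (n + 1) k ⊆ H.partition n ((k + 1) / 2) := by
  rw [partition]
  split_ifs
  exacts [H.half_subset _, sdiff_subset]

theorem partition_eq_union {n k : ℕ} (hk : 1 ≤ k) :
    H.partition n k = H.partition (n + 1) (2 * k - 1) ∪ H.partition (n + 1) (2 * k) := by
  have hodd : Odd (2 * k - 1) := by rw [Nat.odd_iff]; omega
  have heven : ¬Odd (2 * k) := by rw [Nat.odd_iff]; omega
  have hparent₁ : (2 * k - 1 + 1) / 2 = k := by omega
  have hparent₂ : (2 * k + 1) / 2 = k := by omega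
  simp only [partition, hodd, heven, if_true, if_false, hparent₁, hparent₂]
  exact (union_sdiff_cancel (H.half_subset _)).symm

theorem measurableSet_partition (n k : ℕ) : MeasurableSet (H.partition n k) := by
  induction n generalizing k with
  | zero => exact .univ
  | succ n ih =>
    rw [partition]
    split_ifs
    exacts [H.measurableSet_half _ (ih _), (ih _).diff (H.measurableSet_half _ (ih _))]

theorem measure_partition [IsFiniteMeasure ν] (n k : ℕ) :
    ν (H.partition n k) = 2⁻¹ ^ n * ν univ := by
  induction n generalizing k with
  | zero => simp [partition]
  | succ n ih =>
    set P := H.partition n ((k + 1) / 2)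
    have hP : MeasurableSet P := H.measurableSet_partition _ _
    have hhalf : ν (H.half P) = ν P / 2 := H.measure_half P hP
    have hrest : ν (P \ H.half P) = ν P / 2 := by
      rw [measure_sdiff (H.half_subset P) (H.measurableSet_half P hP).nullMeasurableSet
        (measure_ne_top ν _), hhalf, ENNReal.sub_half (measure_ne_top ν _)]
    have : ν P / 2 = 2⁻¹ ^ (n + 1) * ν univ := by
      rw [ih, div_eq_mul_inv, pow_succ]
      ring
    rw [partition]
    split_ifs
    exacts [hhalf.trans this, hrest.trans this]

theorem iUnion_partition (n : ℕ) : ⋃ k ∈ Finset.Icc 1 (2 ^ n), H.partition n k = univ := by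
  induction n with
  | zero => simp [partition]
  | succ n ih =>
    refine eq_univ_of_forall fun x => ?_
    obtain ⟨j, hj, hx⟩ := mem_iUnion₂.1 (ih ▸ mem_univ x)
    rw [Finset.mem_Icc] at hj
    rw [H.partition_eq_union hj.1] at hx
    simp only [mem_iUnion, Finset.mem_Icc, pow_succ]
    rcases hx with hx | hx
    exacts [⟨2 * j - 1, by omega, hx⟩, ⟨2 * j, by omega, hx⟩]

theorem disjoint_partition_succ_of_parent_eq {n k l : ℕ} (hkl : k ≠ l)
    (hparent : (k + 1) / 2 = (l + 1) / 2) :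
    Disjoint (H.partition (n + 1) k) (H.partition (n + 1) l) := by
  have hparity : Odd k ↔ ¬Odd l := by simp only [Nat.odd_iff]; omega
  rw [partition, partition, hparent]
  by_cases hk : Odd k
  · simp only [hk, hparity.1 hk, if_true, if_false]
    exact disjoint_sdiff_right
  · simp only [hk, not_not.1 (mt hparity.2 hk), if_true, if_false]
    exact disjoint_sdiff_left

theorem pairwiseDisjoint_partition (n : ℕ) :
    (↑(Finset.Icc 1 (2 ^ n)) : Set ℕ).PairwiseDisjoint (H.partition n) := by
  induction n with
  | zero =>
    intro k hk l hl hkl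
    simp only [pow_zero, Finset.Icc_self, Finset.coe_singleton, mem_singleton_iff] at hk hl
    exact absurd (hk.trans hl.symm) hkl
  | succ n ih =>
    intro k hk l hl hkl
    by_cases hparent : (k + 1) / 2 = (l + 1) / 2
    · exact H.disjoint_partition_succ_of_parent_eq hkl hparent
    simp only [Finset.coe_Icc, mem_Icc, pow_succ] at hk hl
    refine (ih ?_ ?_ hparent).mono (H.partition_succ_subset n k) (H.partition_succ_subset n l)
    all_goals simp only [Finset.coe_Icc, mem_Icc]; omega

end Halving

end

/-- For an atomless probability measure there is a sequence of successively refining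
partitions of `Ω` into `2^n` measurable sets of equal measure `2^{-n}`. -/
theorem exists_refining_equal_measure_partitions
    {Ω : Type*} [MeasurableSpace Ω] (ν : Measure Ω) [IsProbabilityMeasure ν]
    (hatomless : ∀ A : Set Ω, MeasurableSet A → 0 < ν A →
      ∃ B ⊆ A, MeasurableSet B ∧ 0 < ν B ∧ ν B < ν A) :
    ∃ D : ℕ → ℕ → Set Ω,
      (∀ n, ∀ k ∈ Finset.Icc 1 (2 ^ n), MeasurableSet (D n k)) ∧
      (∀ n, ∀ k ∈ Finset.Icc 1 (2 ^ n), ∀ l ∈ Finset.Icc 1 (2 ^ n), k ≠ l →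
        Disjoint (D n k) (D n l)) ∧
      (∀ n, (⋃ k ∈ Finset.Icc 1 (2 ^ n), D n k) = Set.univ) ∧
      (∀ n, ∀ k ∈ Finset.Icc 1 (2 ^ n), ν (D n k) = (2 ^ n : ℝ≥0∞)⁻¹) ∧
      (∀ n, ∀ k ∈ Finset.Icc 1 (2 ^ n),
        D n k = D (n + 1) (2 * k - 1) ∪ D (n + 1) (2 * k)) := by
  obtain ⟨H⟩ := IsAtomless.nonempty_halving hatomless
  refine ⟨H.partition, fun n k _ => H.measurableSet_partition n k,
    fun n k hk l hl hkl => H.pairwiseDisjoint_partition n hk hl hkl, H.iUnion_partition,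
    fun n k _ => ?_, fun n k hk => H.partition_eq_union (Finset.mem_Icc.1 hk).1⟩
  rw [H.measure_partition, measure_univ, mul_one, ENNReal.inv_pow]
end

section
/- Let (C, μ) be a measure space and ψ ∈ L²(C, μ; ℂ) with ‖ψ‖_{L²} = 1, and define ν(A) := ∫_A |ψ|² dμ for measurable A ⊆ C; assume ν is atomless. Let (C_j)_{j ∈ ℕ} be a countable measurable partition of C. Then there exists a family of measurable sets D_{n,k} ⊆ C (n ∈ ℕ, 1 ≤ k ≤ 2^n) with: (i) for each n the sets D_{n,1}, …, D_{n,2^n} pairwise disjoint with union C and ν(D_{n,k}) = 2^{-n}; (ii) D_{n,k} = D_{n+1,2k-1} ∪ D_{n+1,2k}; and such that, writing M_{n,j} := {k : ν(D_{n,k} \ C_j) = 0}, for every j both: (a) lim_{n→∞} 2^{-n} · #M_{n,j} = ∫_{C_j} |ψ|² dμ, and (b) lim_{n→∞} ‖ Σ_{k ∈ M_{n,j}} 1_{D_{n,k}} · ψ − 1_{C_j} · ψ ‖_{L²(C,μ;ℂ)} = 0. (The Born probability of each outcome is the limiting fraction of equal-weight cells consistent with that outcome.) -/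
/-!
Push `ν` forward to Lebesgue measure. For an atomless finite measure, Sierpiński's theorem (every
value between `0` and `ρ A` is the mass of a measurable subset of `A`) gives a chain of sets
indexed by the dyadic numbers of `[0, 1]`, with masses proportional to the index; the infimum of
the indices of the sets containing `x` is a measurable `G` pushing the measure to Lebesgue measure
on an interval. Doing this on each `C_j`, with the interval `[a_j, a_{j+1})` of length `ν(C_j)`
placed after those of `C_0, …, C_{j-1}`, gives `F` with `F_* ν = Lebesgue|[0, 1)` and
`C_j = F⁻¹[a_j, a_{j+1})` up to a null set. The cells are the preimages of the dyadic intervals.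
A cell is consistent with `C_j` as soon as its interval lies in `[a_j, a_{j+1})`, which happens for
at least `2^n ν(C_j) - 2` of them, while the consistent cells together carry at most `ν(C_j)`.
Hence the fraction converges, and the union `U_n` of the consistent cells satisfies
`ν(U_n ∆ C_j) → 0`; this is the squared `L²` distance in (b).
-/

open MeasureTheory Filter Set
open scoped ENNReal symmDiff

attribute [local instance] Classical.propDecidable

theorem exists_nat_div_two_pow_mem_Ioo {x y : ℝ} (hx : 0 ≤ x) (hxy : x < y) :
    ∃ n i : ℕ, x < i / 2 ^ n ∧ (i : ℝ) / 2 ^ n < y := by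
  obtain ⟨n, hn⟩ := pow_unbounded_of_one_lt (y - x)⁻¹ one_lt_two
  have h2n : (0 : ℝ) < 2 ^ n := by positivity
  have hgap : 1 < 2 ^ n * (y - x) := by
    rw [inv_lt_iff_one_lt_mul₀ (sub_pos.mpr hxy)] at hn
    linarith
  refine ⟨n, ⌊2 ^ n * x⌋₊ + 1, ?_, ?_⟩
  · rw [lt_div_iff₀ h2n, mul_comm]
    exact_mod_cast Nat.lt_floor_add_one _
  · rw [div_lt_iff₀ h2n]
    push_cast
    nlinarith [Nat.floor_le (by positivity : 0 ≤ 2 ^ n * x)]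

theorem iSup_ofReal_min_dyadic_lt (c t : ℝ) :
    ⨆ p : {p : ℕ × ℕ // c * p.2 / 2 ^ p.1 < t},
      ENNReal.ofReal (min (c * p.1.2 / 2 ^ p.1.1) c) = ENNReal.ofReal (min t c) := by
  refine le_antisymm (iSup_le fun p => ENNReal.ofReal_le_ofReal (min_le_min_right _ p.2.le)) ?_
  rcases le_or_gt (min t c) 0 with hm | hm
  · simp [ENNReal.ofReal_of_nonpos hm]
  have hc0 : 0 < c := hm.trans_le (min_le_right _ _)
  refine le_of_forall_lt fun e he => ?_
  have he_top : e ≠ ∞ := ne_top_of_lt he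
  rw [ENNReal.lt_ofReal_iff_toReal_lt he_top] at he
  obtain ⟨n, i, hlo, hhi⟩ := exists_nat_div_two_pow_mem_Ioo
    (div_nonneg ENNReal.toReal_nonneg hc0.le) ((div_lt_div_iff_of_pos_right hc0).mpr he)
  rw [div_lt_iff₀ hc0] at hlo
  rw [lt_div_iff₀ hc0] at hhi
  have hv : c * i / 2 ^ n = i / 2 ^ n * c := by ring
  refine lt_iSup_iff.mpr ⟨⟨(n, i), hv ▸ hhi.trans_le (min_le_left _ _)⟩, ?_⟩
  rw [min_eq_left (hv ▸ hhi.trans_le (min_le_right _ _)).le,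
    ENNReal.lt_ofReal_iff_toReal_lt he_top, hv]
  exact hlo

/-- The index `k ∈ [1, 2 ^ n]` of the dyadic interval `[(k - 1) / 2 ^ n, k / 2 ^ n)` containing `t`;
values outside `[0, 1)` are sent to the first or the last index. -/
noncomputable def dyadicIndex (n : ℕ) (t : ℝ) : ℕ :=
  min ⌊2 ^ n * t⌋₊ (2 ^ n - 1) + 1

theorem dyadicIndex_mem_Icc (n : ℕ) (t : ℝ) : dyadicIndex n t ∈ Finset.Icc 1 (2 ^ n) := by
  have := Nat.one_le_two_pow (n := n)
  simp only [dyadicIndex, Finset.mem_Icc]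
  omega

theorem measurable_dyadicIndex (n : ℕ) : Measurable (dyadicIndex n) :=
  (Measurable.of_discrete (f := fun m : ℕ => min m (2 ^ n - 1) + 1)).comp
    (Nat.measurable_floor.comp (measurable_const_mul _))

theorem dyadicIndex_succ_eq_iff (n k : ℕ) (t : ℝ) :
    dyadicIndex (n + 1) t = 2 * k - 1 ∨ dyadicIndex (n + 1) t = 2 * k ↔ dyadicIndex n t = k := by
  have hfloor : ⌊2 ^ n * t⌋₊ = ⌊2 ^ (n + 1) * t⌋₊ / 2 := by
    rw [← Nat.floor_div_natCast]
    congr 1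
    push_cast
    ring
  have := Nat.one_le_two_pow (n := n)
  have := pow_succ 2 n
  simp only [dyadicIndex, hfloor]
  omega

theorem dyadicIndex_preimage_inter_Ico {n k : ℕ} (hk : k ∈ Finset.Icc 1 (2 ^ n)) :
    dyadicIndex n ⁻¹' {k} ∩ Ico 0 1 = Ico (((k : ℝ) - 1) / 2 ^ n) (k / 2 ^ n) := by
  rw [Finset.mem_Icc] at hk
  have h2n : (0 : ℝ) < 2 ^ n := by positivity
  have hk1 : ((k - 1 : ℕ) : ℝ) = k - 1 := by rw [Nat.cast_sub hk.1, Nat.cast_one]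
  have hkn : (k : ℝ) ≤ 2 ^ n := by exact_mod_cast hk.2
  ext t
  simp only [mem_inter_iff, mem_preimage, mem_singleton_iff, mem_Ico, dyadicIndex]
  constructor
  · rintro ⟨hidx, ht0, ht1⟩
    have hfl : ⌊2 ^ n * t⌋₊ = k - 1 := by
      have : ⌊2 ^ n * t⌋₊ < 2 ^ n := by
        rw [Nat.floor_lt (by positivity)]
        push_cast
        nlinarith
      omega
    rw [Nat.floor_eq_iff (by positivity), hk1] at hfl
    constructor
    · rw [div_le_iff₀ h2n]; linarith
    · rw [lt_div_iff₀ h2n]; linarith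
  · rintro ⟨hlo, hhi⟩
    rw [div_le_iff₀ h2n] at hlo
    rw [lt_div_iff₀ h2n] at hhi
    have ht0 : 0 ≤ t := by nlinarith [(Nat.one_le_cast (α := ℝ)).mpr hk.1]
    have hfl : ⌊2 ^ n * t⌋₊ = k - 1 := by
      rw [Nat.floor_eq_iff (by positivity), hk1]
      constructor <;> linarith
    refine ⟨by omega, ht0, ?_⟩
    nlinarith

section DyadicCell

variable {Ω : Type*} {F : Ω → ℝ}

/-- `F⁻¹ [(k - 1) / 2 ^ n, k / 2 ^ n)`, up to the values of `F` outside `[0, 1)`. -/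
def dyadicCell (F : Ω → ℝ) (n k : ℕ) : Set Ω :=
  F ⁻¹' (dyadicIndex n ⁻¹' {k})

theorem disjoint_dyadicCell {n k l : ℕ} (hkl : k ≠ l) :
    Disjoint (dyadicCell F n k) (dyadicCell F n l) :=
  disjoint_left.mpr fun _ hk hl => hkl (hk.symm.trans hl)

theorem iUnion_dyadicCell (n : ℕ) : ⋃ k ∈ Finset.Icc 1 (2 ^ n), dyadicCell F n k = univ :=
  eq_univ_of_forall fun x => mem_iUnion₂.mpr ⟨_, dyadicIndex_mem_Icc n (F x), rfl⟩

theorem dyadicCell_eq_union (n k : ℕ) :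
    dyadicCell F n k = dyadicCell F (n + 1) (2 * k - 1) ∪ dyadicCell F (n + 1) (2 * k) := by
  ext x
  exact (dyadicIndex_succ_eq_iff n k (F x)).symm

theorem indicator_biUnion_dyadicCell {β : Type*} [AddCommMonoid β] (s : Finset ℕ) (f : Ω → β)
    (n : ℕ) :
    (⋃ k ∈ s, dyadicCell F n k).indicator f = fun x => ∑ k ∈ s, (dyadicCell F n k).indicator f x :=
  funext (Finset.indicator_biUnion_apply s _ fun _ _ _ _ hkl => disjoint_dyadicCell hkl)

end DyadicCell

namespace MeasureTheory

theorem Measure.ext_of_Iio {α : Type*} [TopologicalSpace α] {_ : MeasurableSpace α}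
    [SecondCountableTopology α] [LinearOrder α] [OrderTopology α] [BorelSpace α]
    (μ ν : Measure α) [IsFiniteMeasure μ] (huniv : μ univ = ν univ)
    (h : ∀ a, μ (Iio a) = ν (Iio a)) : μ = ν :=
  ext_of_Ici μ ν fun a => by
    rw [← compl_Iio, measure_compl measurableSet_Iio (measure_ne_top μ _),
      measure_compl measurableSet_Iio (h a ▸ measure_ne_top μ _), h, huniv]

variable {Ω : Type*} [MeasurableSpace Ω]

namespace Measure

/-- Stronger than `NoAtoms`, which only asks singletons to be null. -/
def IsAtomless (ρ : Measure Ω) : Prop :=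
  ∀ A, MeasurableSet A → 0 < ρ A → ∃ B ⊆ A, MeasurableSet B ∧ 0 < ρ B ∧ ρ B < ρ A

def IsMidpointMap (ρ : Measure Ω) (mid : Set Ω → Set Ω → Set Ω) : Prop :=
  ∀ A B, MeasurableSet A → MeasurableSet B → A ⊆ B →
    MeasurableSet (mid A B) ∧ A ⊆ mid A B ∧ mid A B ⊆ B ∧ ρ (mid A B) = (ρ A + ρ B) / 2

theorem exists_add_le_forall_le_two_mul (ρ : Measure Ω) {A B : Set Ω} {r : ℝ≥0∞} (hr : r ≠ ∞)
    (hB : ρ B ≤ r) :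
    ∃ E ⊆ A \ B, MeasurableSet E ∧ ρ B + ρ E ≤ r ∧
      ∀ E' ⊆ A \ B, MeasurableSet E' → ρ B + ρ E' ≤ r → ρ E' ≤ 2 * ρ E := by
  let room := ⨆ (E : Set Ω) (_ : E ⊆ A \ B ∧ MeasurableSet E ∧ ρ B + ρ E ≤ r), ρ E
  have hle : ∀ E' ⊆ A \ B, MeasurableSet E' → ρ B + ρ E' ≤ r → ρ E' ≤ room :=
    fun E' hE'A hE' hE'r =>
      le_iSup₂ (f := fun E (_ : E ⊆ A \ B ∧ MeasurableSet E ∧ ρ B + ρ E ≤ r) => ρ E) E'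
        ⟨hE'A, hE', hE'r⟩
  by_cases h0 : room = 0
  · exact ⟨∅, empty_subset _, .empty, by simpa using hB, fun E' hE'A hE' hE'r => by
      simpa [h0] using hle E' hE'A hE' hE'r⟩
  have hroom_top : room ≠ ∞ :=
    ne_top_of_le_ne_top hr (iSup₂_le fun E hE => le_add_self.trans hE.2.2)
  obtain ⟨E, ⟨hEA, hE, hEr⟩, hlt⟩ :
      ∃ E, (E ⊆ A \ B ∧ MeasurableSet E ∧ ρ B + ρ E ≤ r) ∧ room / 2 < ρ E := by
    have h := ENNReal.half_lt_self h0 hroom_top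
    simp only [room, lt_iSup_iff, exists_prop] at h
    exact h
  refine ⟨E, hEA, hE, hEr, fun E' hE'A hE' hE'r => (hle E' hE'A hE' hE'r).trans ?_⟩
  rw [← ENNReal.add_halves room, two_mul]
  gcongr

theorem exists_monotone_subset_seq_forall_le_two_mul (ρ : Measure Ω) {A : Set Ω} {r : ℝ≥0∞}
    (hr : r ≠ ∞) :
    ∃ B : ℕ → Set Ω, Monotone B ∧ (∀ n, MeasurableSet (B n) ∧ B n ⊆ A ∧ ρ (B n) ≤ r) ∧
      ∀ n, ∀ E ⊆ A \ B n, MeasurableSet E → ρ (B n) + ρ E ≤ r → ρ E ≤ 2 * ρ (B (n + 1) \ B n) := by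
  have step : ∀ B, ∃ E, ρ B ≤ r → E ⊆ A \ B ∧ MeasurableSet E ∧ ρ B + ρ E ≤ r ∧
      ∀ E' ⊆ A \ B, MeasurableSet E' → ρ B + ρ E' ≤ r → ρ E' ≤ 2 * ρ E := fun B => by
    by_cases hB : ρ B ≤ r
    · obtain ⟨E, hE⟩ := exists_add_le_forall_le_two_mul ρ (A := A) hr hB
      exact ⟨E, fun _ => hE⟩
    · exact ⟨∅, fun h => absurd h hB⟩
  choose E hE using step
  let B : ℕ → Set Ω := fun n => (fun S => S ∪ E S)^[n] ∅
  have hB_succ : ∀ n, B (n + 1) = B n ∪ E (B n) := fun n => Function.iterate_succ_apply' _ _ _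
  have hB : ∀ n, MeasurableSet (B n) ∧ B n ⊆ A ∧ ρ (B n) ≤ r := by
    intro n
    induction n with
    | zero => simp [B]
    | succ n ih =>
      obtain ⟨hEB, hEmeas, hEr, -⟩ := hE _ ih.2.2
      rw [hB_succ, measure_union (disjoint_sdiff_right.mono_right hEB) hEmeas]
      exact ⟨ih.1.union hEmeas, union_subset ih.2.1 (hEB.trans sdiff_subset), hEr⟩
  refine ⟨B, monotone_nat_of_le_succ fun n => hB_succ n ▸ subset_union_left, hB,
    fun n E' hE'A hE' hE'r => ?_⟩
  obtain ⟨hEB, -, -, hEmax⟩ := hE _ (hB n).2.2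
  rw [hB_succ, union_sdiff_left, sdiff_eq_left.mpr (disjoint_sdiff_right.mono_right hEB).symm]
  exact hEmax E' hE'A hE' hE'r

namespace IsAtomless

variable {ρ : Measure Ω}

theorem restrict (hρ : ρ.IsAtomless) {s : Set Ω} (hs : MeasurableSet s) :
    (ρ.restrict s).IsAtomless := by
  intro A hA hpos
  rw [restrict_apply hA] at hpos
  obtain ⟨B, hBA, hB, hBpos, hBlt⟩ := hρ (A ∩ s) (hA.inter hs) hpos
  have hBs : B ∩ s = B := inter_eq_left.mpr (hBA.trans inter_subset_right)
  exact ⟨B, hBA.trans inter_subset_left, hB, by rwa [restrict_apply hB, hBs],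
    by rwa [restrict_apply hB, restrict_apply hA, hBs]⟩

theorem of_forall_eq_toReal [IsFiniteMeasure ρ] {ν : Set Ω → ℝ}
    (hνρ : ∀ A, MeasurableSet A → ν A = (ρ A).toReal)
    (hν : ∀ A, MeasurableSet A → 0 < ν A → ∃ B ⊆ A, MeasurableSet B ∧ 0 < ν B ∧ ν B < ν A) :
    ρ.IsAtomless := by
  intro A hA hpos
  obtain ⟨B, hBA, hB, hBpos, hBlt⟩ := hν A hA
    (by rw [hνρ A hA]; exact ENNReal.toReal_pos hpos.ne' (measure_ne_top ρ A))
  rw [hνρ B hB] at hBpos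
  rw [hνρ B hB, hνρ A hA, ENNReal.toReal_lt_toReal (measure_ne_top ρ B) (measure_ne_top ρ A)]
    at hBlt
  exact ⟨B, hBA, hB, (ENNReal.toReal_pos_iff.mp hBpos).1, hBlt⟩

theorem exists_subset_two_mul_measure_le (hρ : ρ.IsAtomless) {A : Set Ω}
    (hA : MeasurableSet A) (hpos : 0 < ρ A) :
    ∃ B ⊆ A, MeasurableSet B ∧ 0 < ρ B ∧ 2 * ρ B ≤ ρ A := by
  obtain ⟨E, hEA, hE, hEpos, hElt⟩ := hρ A hA hpos
  have hsplit : ρ E + ρ (A \ E) = ρ A := by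
    rw [measure_add_sdiff hE.nullMeasurableSet A, union_eq_right.mpr hEA]
  rcases le_total (ρ (A \ E)) (ρ E) with hle | hle
  · refine ⟨A \ E, sdiff_subset, hA.diff hE, ?_, ?_⟩
    · refine pos_iff_ne_zero.mpr fun h0 => hElt.ne ?_
      rw [← hsplit, h0, add_zero]
    · rw [two_mul, ← hsplit]
      gcongr
  · refine ⟨E, hEA, hE, hEpos, ?_⟩
    rw [two_mul, ← hsplit]
    gcongr

variable [IsFiniteMeasure ρ]

theorem exists_subset_measure_pos_le (hρ : ρ.IsAtomless) {A : Set Ω}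
    (hA : MeasurableSet A) (hpos : 0 < ρ A) {ε : ℝ≥0∞} (hε : 0 < ε) :
    ∃ B ⊆ A, MeasurableSet B ∧ 0 < ρ B ∧ ρ B ≤ ε := by
  have halving : ∀ n : ℕ, ∃ B ⊆ A, MeasurableSet B ∧ 0 < ρ B ∧ 2 ^ n * ρ B ≤ ρ A := by
    intro n
    induction n with
    | zero => exact ⟨A, subset_rfl, hA, hpos, by simp⟩
    | succ n ih =>
      obtain ⟨B, hBA, hB, hBpos, hBle⟩ := ih
      obtain ⟨B', hB'B, hB', hB'pos, hB'le⟩ := exists_subset_two_mul_measure_le hρ hB hBpos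
      refine ⟨B', hB'B.trans hBA, hB', hB'pos, le_trans ?_ hBle⟩
      rw [pow_succ, mul_assoc]
      gcongr
  obtain ⟨n, hn⟩ := ENNReal.exists_nat_mul_gt hε.ne' (measure_ne_top ρ A)
  obtain ⟨B, hBA, hB, hBpos, hBle⟩ := halving n
  refine ⟨B, hBA, hB, hBpos, ?_⟩
  by_contra! hεB
  have hn2 : (n : ℝ≥0∞) ≤ 2 ^ n := by exact_mod_cast Nat.lt_two_pow_self.le
  exact (hn.trans_le ((mul_le_mul' hn2 hεB.le).trans hBle)).false

/-- Sierpiński's theorem. -/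
theorem exists_subset_measure_eq (hρ : ρ.IsAtomless) {A : Set Ω} (hA : MeasurableSet A)
    {r : ℝ≥0∞} (hr : r ≤ ρ A) :
    ∃ B ⊆ A, MeasurableSet B ∧ ρ B = r := by
  have hr_top : r ≠ ∞ := ne_top_of_le_ne_top (measure_ne_top ρ A) hr
  obtain ⟨B, hB_mono, hB, hstep⟩ := exists_monotone_subset_seq_forall_le_two_mul ρ (A := A) hr_top
  have hUnion : MeasurableSet (⋃ n, B n) := .iUnion fun n => (hB n).1
  refine ⟨⋃ n, B n, iUnion_subset fun n => (hB n).2.1, hUnion, ?_⟩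
  refine le_antisymm (hB_mono.measure_iUnion ▸ iSup_le fun n => (hB n).2.2) ?_
  by_contra! hlt
  obtain ⟨E₀, hE₀A, hE₀, hE₀pos, hE₀le⟩ := exists_subset_measure_pos_le hρ (hA.diff hUnion)
    (by
      rw [measure_sdiff (iUnion_subset fun n => (hB n).2.1) hUnion.nullMeasurableSet
        (measure_ne_top _ _)]
      exact tsub_pos_of_lt (hlt.trans_le hr))
    (tsub_pos_of_lt hlt)
  -- `E₀` could still be added at every stage, so every step adds at least `ρ E₀ / 2`.
  have hgrowth : ∀ n : ℕ, n * ρ E₀ ≤ 2 * ρ (B n) := by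
    intro n
    induction n with
    | zero => simp
    | succ n ih =>
      rw [← union_sdiff_cancel (hB_mono n.le_succ),
        measure_union disjoint_sdiff_right ((hB _).1.diff (hB n).1), mul_add, Nat.cast_succ,
        add_one_mul]
      refine add_le_add ih (hstep n E₀
        (hE₀A.trans (sdiff_subset_sdiff_right (subset_iUnion B n))) hE₀ ?_)
      exact (add_le_add (measure_mono (subset_iUnion B n)) hE₀le).trans
        (add_tsub_cancel_of_le hlt.le).le
  obtain ⟨n, hn⟩ := ENNReal.exists_nat_mul_gt hE₀pos.ne' (b := 2 * r) (by finiteness)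
  exact (hn.trans_le ((hgrowth n).trans (by gcongr; exact (hB n).2.2))).false

theorem exists_between_measure_eq_midpoint (hρ : ρ.IsAtomless) {A B : Set Ω}
    (hA : MeasurableSet A) (hB : MeasurableSet B) (hAB : A ⊆ B) :
    ∃ M, MeasurableSet M ∧ A ⊆ M ∧ M ⊆ B ∧ ρ M = (ρ A + ρ B) / 2 := by
  obtain ⟨E, hEBA, hE, hEmeas⟩ := exists_subset_measure_eq hρ (hB.diff hA)
    (ENNReal.half_le_self (a := ρ (B \ A)))
  refine ⟨A ∪ E, hA.union hE, subset_union_left, union_subset hAB (hEBA.trans sdiff_subset), ?_⟩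
  have hBA : ρ B = ρ A + ρ (B \ A) := by
    rw [measure_add_sdiff hA.nullMeasurableSet B, union_eq_right.mpr hAB]
  rw [measure_union (disjoint_sdiff_right.mono_right hEBA) hE, hEmeas, hBA, ← add_assoc,
    ← two_mul, ENNReal.add_div, mul_comm 2,
    ENNReal.mul_div_cancel_right two_ne_zero ENNReal.ofNat_ne_top]

theorem exists_isMidpointMap (hρ : ρ.IsAtomless) : ∃ mid, IsMidpointMap ρ mid := by
  have h : ∀ A B : Set Ω, ∃ M, MeasurableSet A → MeasurableSet B → A ⊆ B →
      MeasurableSet M ∧ A ⊆ M ∧ M ⊆ B ∧ ρ M = (ρ A + ρ B) / 2 := fun A B => by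
    by_cases hAB : MeasurableSet A ∧ MeasurableSet B ∧ A ⊆ B
    · obtain ⟨M, hM⟩ := hρ.exists_between_measure_eq_midpoint hAB.1 hAB.2.1 hAB.2.2
      exact ⟨M, fun _ _ _ => hM⟩
    · exact ⟨∅, fun hA hB hAB' => absurd ⟨hA, hB, hAB'⟩ hAB⟩
  choose mid hmid using h
  exact ⟨mid, hmid⟩

end IsAtomless

end Measure

end MeasureTheory

section DyadicChain

variable {Ω : Type*}

/-- Level `n` of a chain of sets indexed by the dyadic numbers `i / 2 ^ n`. -/
def dyadicChain (mid : Set Ω → Set Ω → Set Ω) : ℕ → ℕ → Set Ω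
  | 0, i => if i = 0 then ∅ else univ
  | n + 1, i =>
    if Even i then dyadicChain mid n (i / 2)
    else mid (dyadicChain mid n (i / 2)) (dyadicChain mid n (i / 2 + 1))

namespace dyadicChain

variable {mid : Set Ω → Set Ω → Set Ω}

theorem succ_two_mul (n i : ℕ) : dyadicChain mid (n + 1) (2 * i) = dyadicChain mid n i := by
  simp [dyadicChain]

theorem succ_two_mul_add_one (n i : ℕ) :
    dyadicChain mid (n + 1) (2 * i + 1) =
      mid (dyadicChain mid n i) (dyadicChain mid n (i + 1)) := by
  have h : (2 * i + 1) / 2 = i := by omega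
  simp [dyadicChain, h]

theorem add_mul_two_pow (n m i : ℕ) :
    dyadicChain mid (n + m) (i * 2 ^ m) = dyadicChain mid n i := by
  induction m with
  | zero => simp
  | succ m ih => rw [← add_assoc, pow_succ, ← mul_assoc, mul_comm _ 2, succ_two_mul, ih]

variable [MeasurableSpace Ω] {ρ : MeasureTheory.Measure Ω} (hmid : ρ.IsMidpointMap mid)
include hmid

theorem measurableSet_and_monotone (n : ℕ) :
    (∀ i, MeasurableSet (dyadicChain mid n i)) ∧ Monotone (dyadicChain mid n) := by
  induction n with
  | zero =>
    refine ⟨fun i => ?_, monotone_nat_of_le_succ fun i => ?_⟩ <;>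
      by_cases i = 0 <;> simp_all [dyadicChain]
  | succ n ih =>
    have hm i := hmid _ _ (ih.1 i) (ih.1 (i + 1)) (ih.2 i.le_succ)
    refine ⟨fun i => ?_, monotone_nat_of_le_succ fun i => ?_⟩ <;>
      obtain ⟨k, rfl | rfl⟩ := Nat.even_or_odd' i
    · rw [succ_two_mul]; exact ih.1 k
    · rw [succ_two_mul_add_one]; exact (hm k).1
    · rw [succ_two_mul, succ_two_mul_add_one]; exact (hm k).2.1
    · rw [succ_two_mul_add_one, show 2 * k + 1 + 1 = 2 * (k + 1) by ring, succ_two_mul]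
      exact (hm k).2.2.1

theorem measurableSet (n i : ℕ) : MeasurableSet (dyadicChain mid n i) :=
  (measurableSet_and_monotone hmid n).1 i

theorem monotone (n : ℕ) : Monotone (dyadicChain mid n) :=
  (measurableSet_and_monotone hmid n).2

theorem eq_univ_of_two_pow_le {n i : ℕ} (hi : 2 ^ n ≤ i) : dyadicChain mid n i = univ := by
  induction n generalizing i with
  | zero => simp [dyadicChain, Nat.one_le_iff_ne_zero.mp hi]
  | succ n ih =>
    obtain ⟨k, rfl | rfl⟩ := Nat.even_or_odd' i
    · rw [succ_two_mul, ih (by omega)]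
    · rw [pow_succ] at hi
      rw [succ_two_mul_add_one, ih (by omega), ih (by omega)]
      exact univ_subset_iff.mp (hmid _ _ .univ .univ subset_rfl).2.1

theorem subset_or_subset (n i m j : ℕ) :
    dyadicChain mid n i ⊆ dyadicChain mid m j ∨ dyadicChain mid m j ⊆ dyadicChain mid n i := by
  rw [← add_mul_two_pow n m i, ← add_mul_two_pow m n j, add_comm m n]
  exact (le_total _ _).imp (fun h => monotone hmid _ h) (fun h => monotone hmid _ h)

variable [MeasureTheory.IsFiniteMeasure ρ]

theorem measure_eq_of_le_two_pow {n i : ℕ} (hi : i ≤ 2 ^ n) :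
    ρ (dyadicChain mid n i) = ENNReal.ofReal ((ρ univ).toReal * i / 2 ^ n) := by
  induction n generalizing i with
  | zero => interval_cases i <;> simp [dyadicChain]
  | succ n ih =>
    rw [pow_succ] at hi
    obtain ⟨k, rfl | rfl⟩ := Nat.even_or_odd' i
    · rw [succ_two_mul, ih (by omega)]
      congr 1
      push_cast
      ring
    · rw [succ_two_mul_add_one, (hmid _ _ (measurableSet hmid n k) (measurableSet hmid n (k + 1))
        (monotone hmid n k.le_succ)).2.2.2, ih (by omega), ih (by omega),
        ← ENNReal.ofReal_add (by positivity) (by positivity), ← ENNReal.ofReal_ofNat 2,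
        ← ENNReal.ofReal_div_of_pos two_pos]
      congr 1
      push_cast
      ring

theorem measure_eq (n i : ℕ) :
    ρ (dyadicChain mid n i) =
      ENNReal.ofReal (min ((ρ univ).toReal * i / 2 ^ n) (ρ univ).toReal) := by
  have hc : 0 ≤ (ρ univ).toReal := ENNReal.toReal_nonneg
  rcases le_total i (2 ^ n) with hi | hi
  · rw [measure_eq_of_le_two_pow hmid hi, min_eq_left]
    rw [mul_div_assoc]
    exact mul_le_of_le_one_right hc ((div_le_one (by positivity)).mpr (by exact_mod_cast hi))
  · rw [eq_univ_of_two_pow_le hmid hi, min_eq_right,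
      ENNReal.ofReal_toReal (MeasureTheory.measure_ne_top _ _)]
    rw [mul_div_assoc]
    exact le_mul_of_one_le_right hc ((one_le_div (by positivity)).mpr (by exact_mod_cast hi))

end dyadicChain

end DyadicChain

namespace MeasureTheory

variable {Ω : Type*} [MeasurableSpace Ω]

theorem Measure.IsAtomless.exists_map_eq_volume_restrict {ρ : Measure Ω} [IsFiniteMeasure ρ]
    (hρ : ρ.IsAtomless) :
    ∃ G : Ω → ℝ, Measurable G ∧ ρ.map G = volume.restrict (Ico 0 (ρ univ).toReal) := by
  obtain ⟨mid, hmid⟩ := hρ.exists_isMidpointMap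
  set c := (ρ univ).toReal
  have hc : 0 ≤ c := ENNReal.toReal_nonneg
  let S : ℕ × ℕ → Set Ω := fun p => dyadicChain mid p.1 p.2
  let v : ℕ × ℕ → ℝ := fun p => c * p.2 / 2 ^ p.1
  -- `G x` is the infimum of the levels `c i / 2 ^ n` of the chain sets containing `x`, so
  -- `{G < t}` is the (directed) union of the chain sets of level below `t`.
  let G : Ω → ℝ := fun x => ⨅ p, if x ∈ S p then v p else c
  have hG_bdd : ∀ x, BddBelow (range fun p => if x ∈ S p then v p else c) := fun x =>
    ⟨0, forall_mem_range.mpr fun p => by split_ifs <;> positivity⟩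
  have hS_univ : S (0, 1) = univ := dyadicChain.eq_univ_of_two_pow_le hmid le_rfl
  have hG_lt : ∀ t, G ⁻¹' Iio t = ⋃ p : {p // v p < t}, S p := by
    intro t
    ext x
    simp only [G, mem_preimage, mem_Iio, mem_iUnion, Subtype.exists, exists_prop]
    rw [ciInf_lt_iff (hG_bdd x)]
    constructor
    · rintro ⟨p, hp⟩
      split_ifs at hp with hx
      · exact ⟨p, hp, hx⟩
      · exact ⟨(0, 1), by simpa [v] using hp, hS_univ ▸ mem_univ x⟩
    · rintro ⟨p, hp, hx⟩
      exact ⟨p, by simpa [hx] using hp⟩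
  have hG : Measurable G := Measurable.iInf fun p =>
    Measurable.ite (dyadicChain.measurableSet hmid p.1 p.2) measurable_const measurable_const
  have hdir : ∀ t, Directed (· ⊆ ·) fun p : {p // v p < t} => S p := fun t p q =>
    (dyadicChain.subset_or_subset hmid p.1.1 p.1.2 q.1.1 q.1.2).elim
      (fun h => ⟨q, h, subset_rfl⟩) (fun h => ⟨p, subset_rfl, h⟩)
  refine ⟨G, hG, ext_of_Iio _ _ ?_ fun t => ?_⟩
  · rw [Measure.map_apply hG .univ, preimage_univ, Measure.restrict_apply_univ, Real.volume_Ico,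
      sub_zero, ENNReal.ofReal_toReal (measure_ne_top ρ _)]
  · rw [Measure.map_apply hG measurableSet_Iio, hG_lt, (hdir t).measure_iUnion,
      Measure.restrict_apply measurableSet_Iio, inter_comm, Ico_inter_Iio, Real.volume_Ico,
      sub_zero, min_comm]
    simp_rw [S, dyadicChain.measure_eq hmid]
    exact iSup_ofReal_min_dyadic_lt c t

theorem Measure.IsAtomless.exists_map_eq_volume_restrict_Ico {ρ : Measure Ω} [IsFiniteMeasure ρ]
    (hρ : ρ.IsAtomless) (a : ℝ) :
    ∃ G : Ω → ℝ, Measurable G ∧ ρ.map G = volume.restrict (Ico a (a + (ρ univ).toReal)) := by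
  obtain ⟨G, hG, hmap⟩ := hρ.exists_map_eq_volume_restrict
  refine ⟨fun x => a + G x, hG.const_add a, ?_⟩
  have h := (measurePreserving_add_left volume a).restrict_preimage
    (measurableSet_Ico (a := a) (b := a + (ρ univ).toReal))
  rw [preimage_const_add_Ico, sub_self, add_sub_cancel_left] at h
  change map ((a + ·) ∘ G) ρ = _
  rw [← Measure.map_map (measurable_const_add a) hG, hmap, h.map_eq]

theorem exists_measurable_map_eq_restrict_iUnion {β : Type*} [MeasurableSpace β]
    {ρ : Measure Ω} {C : ℕ → Set Ω} (hC : ∀ j, MeasurableSet (C j))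
    (hCdisj : Pairwise (Function.onFun Disjoint C)) (hCcover : ⋃ j, C j = univ)
    {ν : Measure β} {I : ℕ → Set β} (hI : ∀ j, MeasurableSet (I j))
    (hIdisj : Pairwise (Function.onFun Disjoint I)) {G : ℕ → Ω → β} (hG : ∀ j, Measurable (G j))
    (hGmap : ∀ j, (ρ.restrict (C j)).map (G j) = ν.restrict (I j)) :
    ∃ F : Ω → β, Measurable F ∧ ρ.map F = ν.restrict (⋃ j, I j) ∧
      ∀ j, C j =ᵐ[ρ] F ⁻¹' I j := by
  have hmem : ∀ x, ∃ j, x ∈ C j := fun x => mem_iUnion.mp (hCcover ▸ mem_univ x)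
  let F : Ω → β := fun x => G (Nat.find (hmem x)) x
  have hFG : ∀ j, ∀ x ∈ C j, F x = G j x := by
    intro j x hx
    have hfind : Nat.find (hmem x) = j := by
      by_contra hne
      exact disjoint_left.mp (hCdisj hne) (Nat.find_spec (hmem x)) hx
    simp only [F, hfind]
  have hF : Measurable F := Measurable.find (p := fun j x => x ∈ C j) hG hC hmem
  have hmap : ∀ j, (ρ.restrict (C j)).map F = ν.restrict (I j) := fun j => by
    rw [Measure.map_congr (ae_restrict_of_forall_mem (hC j) (hFG j)), hGmap]
  refine ⟨F, hF, ?_, fun j => eventuallyEq_set.mpr ?_⟩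
  · rw [Measure.restrict_iUnion hIdisj hI, ← Measure.restrict_univ (μ := ρ), ← hCcover,
      Measure.restrict_iUnion hCdisj hC, Measure.map_sum hF.aemeasurable]
    simp_rw [hmap]
  have hae : ∀ i, ∀ᵐ x ∂ρ, x ∈ C i → F x ∈ I i := fun i => by
    rw [← ae_restrict_iff' (hC i)]
    refine ae_of_ae_map hF.aemeasurable ?_
    rw [hmap]
    exact ae_restrict_mem (hI i)
  filter_upwards [ae_all_iff.mpr hae] with x hx
  refine ⟨hx j, fun hFx => ?_⟩
  obtain ⟨i, hi⟩ := hmem x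
  obtain rfl : i = j := by
    by_contra hne
    exact disjoint_left.mp (hIdisj hne) (hx i hi) hFx
  exact hi

/-- The left end `a_j` of the interval of `[0, 1)` allotted to `C j`. -/
noncomputable def cumulativeMass (ρ : Measure Ω) (C : ℕ → Set Ω) (j : ℕ) : ℝ :=
  ∑ i ∈ Finset.range j, (ρ (C i)).toReal

theorem cumulativeMass_succ (ρ : Measure Ω) (C : ℕ → Set Ω) (j : ℕ) :
    cumulativeMass ρ C (j + 1) = cumulativeMass ρ C j + (ρ (C j)).toReal :=
  Finset.sum_range_succ _ j

theorem cumulativeMass_nonneg (ρ : Measure Ω) (C : ℕ → Set Ω) (j : ℕ) :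
    0 ≤ cumulativeMass ρ C j :=
  Finset.sum_nonneg fun _ _ => ENNReal.toReal_nonneg

theorem monotone_cumulativeMass (ρ : Measure Ω) (C : ℕ → Set Ω) :
    Monotone (cumulativeMass ρ C) :=
  monotone_nat_of_le_succ fun j => by
    rw [cumulativeMass_succ]
    exact le_add_of_nonneg_right ENNReal.toReal_nonneg

theorem tsum_measure_eq_one_of_iUnion_eq_univ {ρ : Measure Ω} [IsProbabilityMeasure ρ]
    {C : ℕ → Set Ω} (hC : ∀ j, MeasurableSet (C j)) (hCdisj : Pairwise (Function.onFun Disjoint C))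
    (hCcover : ⋃ j, C j = univ) : ∑' j, ρ (C j) = 1 := by
  rw [← measure_iUnion hCdisj hC, hCcover, measure_univ]

theorem cumulativeMass_le_one {ρ : Measure Ω} [IsProbabilityMeasure ρ] {C : ℕ → Set Ω}
    (hC : ∀ j, MeasurableSet (C j)) (hCdisj : Pairwise (Function.onFun Disjoint C))
    (hCcover : ⋃ j, C j = univ) (j : ℕ) : cumulativeMass ρ C j ≤ 1 := by
  have htsum := tsum_measure_eq_one_of_iUnion_eq_univ (ρ := ρ) hC hCdisj hCcover
  calc cumulativeMass ρ C j = (∑ i ∈ Finset.range j, ρ (C i)).toReal :=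
        (ENNReal.toReal_sum fun i _ => measure_ne_top ρ _).symm
    _ ≤ (∑' i, ρ (C i)).toReal := ENNReal.toReal_mono (by simp [htsum]) (ENNReal.sum_le_tsum _)
    _ = 1 := by rw [htsum, ENNReal.toReal_one]

theorem pairwise_disjoint_Ico_cumulativeMass (ρ : Measure Ω) (C : ℕ → Set Ω) :
    Pairwise (Function.onFun Disjoint
      fun j => Ico (cumulativeMass ρ C j) (cumulativeMass ρ C (j + 1))) := by
  simpa only [Order.succ_eq_add_one] using
    (monotone_cumulativeMass ρ C).pairwise_disjoint_on_Ico_succ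

theorem iUnion_Ico_cumulativeMass_ae_eq {ρ : Measure Ω} [IsProbabilityMeasure ρ]
    {C : ℕ → Set Ω} (hC : ∀ j, MeasurableSet (C j))
    (hCdisj : Pairwise (Function.onFun Disjoint C)) (hCcover : ⋃ j, C j = univ) :
    ⋃ j, Ico (cumulativeMass ρ C j) (cumulativeMass ρ C (j + 1)) =ᵐ[volume] Ico (0 : ℝ) 1 := by
  refine ae_eq_of_subset_of_measure_ge
    (iUnion_subset fun j => Ico_subset_Ico (cumulativeMass_nonneg ρ C j)
      (cumulativeMass_le_one hC hCdisj hCcover (j + 1))) (le_of_eq ?_)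
    (MeasurableSet.iUnion fun j => measurableSet_Ico).nullMeasurableSet (by simp)
  rw [measure_iUnion (pairwise_disjoint_Ico_cumulativeMass ρ C) fun j => measurableSet_Ico]
  simp_rw [Real.volume_Ico, cumulativeMass_succ, add_sub_cancel_left,
    ENNReal.ofReal_toReal (measure_ne_top ρ _),
    tsum_measure_eq_one_of_iUnion_eq_univ (ρ := ρ) hC hCdisj hCcover, sub_zero, ENNReal.ofReal_one]

theorem Measure.IsAtomless.exists_map_eq_volume_Ico_of_partition {ρ : Measure Ω}
    [IsProbabilityMeasure ρ] (hρ : ρ.IsAtomless) {C : ℕ → Set Ω} (hC : ∀ j, MeasurableSet (C j))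
    (hCdisj : Pairwise (Function.onFun Disjoint C)) (hCcover : ⋃ j, C j = univ) :
    ∃ F : Ω → ℝ, Measurable F ∧ ρ.map F = volume.restrict (Ico 0 1) ∧
      ∀ j, C j =ᵐ[ρ] F ⁻¹' Ico (cumulativeMass ρ C j) (cumulativeMass ρ C (j + 1)) := by
  have hG : ∀ j, ∃ G : Ω → ℝ, Measurable G ∧ (ρ.restrict (C j)).map G =
      volume.restrict (Ico (cumulativeMass ρ C j) (cumulativeMass ρ C (j + 1))) := fun j => by
    rw [cumulativeMass_succ, ← Measure.restrict_apply_univ]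
    exact (hρ.restrict (hC j)).exists_map_eq_volume_restrict_Ico _
  choose G hG hGmap using hG
  obtain ⟨F, hF, hmap, hae⟩ := exists_measurable_map_eq_restrict_iUnion hC hCdisj hCcover
    (fun j => measurableSet_Ico) (pairwise_disjoint_Ico_cumulativeMass ρ C) hG hGmap
  exact ⟨F, hF, hmap.trans
    (Measure.restrict_congr_set (iUnion_Ico_cumulativeMass_ae_eq hC hCdisj hCcover)), hae⟩

theorem measure_symmDiff_eq_sub_of_measure_sdiff_eq_zero {ρ : Measure Ω} {U E : Set Ω}
    (hU : MeasurableSet U) (hE : MeasurableSet E) (hUE : ρ (U \ E) = 0) (hU_top : ρ U ≠ ∞) :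
    ρ (U ∆ E) = ρ E - ρ U := by
  rw [measure_symmDiff_eq hU.nullMeasurableSet hE.nullMeasurableSet, hUE, zero_add]
  refine ENNReal.eq_sub_of_add_eq hU_top ?_
  have hinter : ρ (U ∩ E) = ρ U := by
    rw [← add_zero (ρ (U ∩ E)), ← hUE, measure_inter_add_sdiff _ hE]
  rw [← hinter, inter_comm, measure_sdiff_add_inter _ hU]

section Cells

variable {F : Ω → ℝ} {ρ : Measure Ω}

theorem measurableSet_dyadicCell (hF : Measurable F) (n k : ℕ) :
    MeasurableSet (dyadicCell F n k) :=
  ((measurable_dyadicIndex n).comp hF) (measurableSet_singleton k)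

theorem measure_dyadicCell (hF : Measurable F) (hmap : ρ.map F = volume.restrict (Ico 0 1))
    {n k : ℕ} (hk : k ∈ Finset.Icc 1 (2 ^ n)) :
    ρ (dyadicCell F n k) = ENNReal.ofReal (2 ^ n)⁻¹ := by
  have hmeas := measurable_dyadicIndex n (measurableSet_singleton k)
  rw [dyadicCell, ← Measure.map_apply hF hmeas, hmap, Measure.restrict_apply hmeas,
    dyadicIndex_preimage_inter_Ico hk, Real.volume_Ico]
  congr 1
  ring

noncomputable def consistentCells (ρ : Measure Ω) (F : Ω → ℝ) (E : Set Ω) (n : ℕ) : Finset ℕ :=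
  (Finset.Icc 1 (2 ^ n)).filter fun k => ρ (dyadicCell F n k \ E) = 0

theorem measure_biUnion_consistentCells_sdiff (E : Set Ω) (n : ℕ) :
    ρ ((⋃ k ∈ consistentCells ρ F E n, dyadicCell F n k) \ E) = 0 := by
  simp_rw [iUnion_sdiff]
  exact (measure_biUnion_null_iff (Finset.countable_toSet _)).mpr fun k hk =>
    (Finset.mem_filter.mp hk).2

theorem measure_biUnion_consistentCells (hF : Measurable F)
    (hmap : ρ.map F = volume.restrict (Ico 0 1)) (E : Set Ω) (n : ℕ) :
    ρ (⋃ k ∈ consistentCells ρ F E n, dyadicCell F n k) =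
      ENNReal.ofReal ((consistentCells ρ F E n).card / 2 ^ n) := by
  rw [measure_biUnion_finset (fun k _ l _ hkl => disjoint_dyadicCell hkl)
    fun k _ => measurableSet_dyadicCell hF n k]
  calc ∑ k ∈ consistentCells ρ F E n, ρ (dyadicCell F n k)
      = ∑ k ∈ consistentCells ρ F E n, ENNReal.ofReal (2 ^ n)⁻¹ :=
        Finset.sum_congr rfl fun k hk => measure_dyadicCell hF hmap (Finset.mem_filter.mp hk).1
    _ = _ := by
      rw [Finset.sum_const, nsmul_eq_mul, div_eq_mul_inv, ENNReal.ofReal_mul (Nat.cast_nonneg _),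
        ENNReal.ofReal_natCast]

theorem measure_eq_ofReal_of_ae_eq_preimage_Ico (hF : Measurable F)
    (hmap : ρ.map F = volume.restrict (Ico 0 1)) {E : Set Ω} {a b : ℝ}
    (hE : E =ᵐ[ρ] F ⁻¹' Ico a b) (ha : 0 ≤ a) (hb : b ≤ 1) : ρ E = ENNReal.ofReal (b - a) := by
  rw [measure_congr hE, ← Measure.map_apply hF measurableSet_Ico, hmap,
    Measure.restrict_apply measurableSet_Ico, inter_eq_left.mpr (Ico_subset_Ico ha hb),
    Real.volume_Ico]

theorem Icc_subset_consistentCells (hF : Measurable F)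
    (hmap : ρ.map F = volume.restrict (Ico 0 1)) {E : Set Ω} {a b : ℝ}
    (hE : E =ᵐ[ρ] F ⁻¹' Ico a b) (hb : b ≤ 1) (n : ℕ) :
    Finset.Icc (⌈2 ^ n * a⌉₊ + 1) ⌊2 ^ n * b⌋₊ ⊆ consistentCells ρ F E n := by
  intro k hk
  rw [Finset.mem_Icc] at hk
  have h2n : (0 : ℝ) < 2 ^ n := by positivity
  have hkn : k ∈ Finset.Icc 1 (2 ^ n) := by
    refine Finset.mem_Icc.mpr ⟨by omega, hk.2.trans (Nat.floor_le_of_le ?_)⟩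
    push_cast
    nlinarith
  refine Finset.mem_filter.mpr ⟨hkn, ?_⟩
  have hmeas := measurable_dyadicIndex n (measurableSet_singleton k)
  rw [measure_congr ((ae_eq_refl _).diff hE), dyadicCell, ← preimage_sdiff,
    ← Measure.map_apply hF (hmeas.diff measurableSet_Ico), hmap,
    Measure.restrict_apply (hmeas.diff measurableSet_Ico), ← inter_sdiff_right_comm,
    dyadicIndex_preimage_inter_Ico hkn, sdiff_eq_empty.mpr, measure_empty]
  refine Ico_subset_Ico ?_ ?_
  · rw [le_div_iff₀ h2n, mul_comm]
    have : (⌈2 ^ n * a⌉₊ : ℝ) + 1 ≤ k := by exact_mod_cast hk.1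
    linarith [Nat.le_ceil (2 ^ n * a)]
  · rw [div_le_iff₀ h2n, mul_comm]
    exact (Nat.le_floor_iff' (by omega)).mp hk.2

theorem card_consistentCells_ge (hF : Measurable F) (hmap : ρ.map F = volume.restrict (Ico 0 1))
    {E : Set Ω} {a b : ℝ} (hE : E =ᵐ[ρ] F ⁻¹' Ico a b) (ha : 0 ≤ a) (hb : b ≤ 1) (n : ℕ) :
    2 ^ n * (b - a) - 2 ≤ (consistentCells ρ F E n).card := by
  have hcard := Finset.card_le_card (Icc_subset_consistentCells hF hmap hE hb n)
  rw [Nat.card_Icc] at hcard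
  have hfloor : (⌊2 ^ n * b⌋₊ : ℝ) ≤ (consistentCells ρ F E n).card + ⌈2 ^ n * a⌉₊ := by
    exact_mod_cast (by omega : ⌊2 ^ n * b⌋₊ ≤ (consistentCells ρ F E n).card + ⌈2 ^ n * a⌉₊)
  linarith [Nat.lt_floor_add_one (2 ^ n * b), Nat.ceil_lt_add_one (by positivity : 0 ≤ 2 ^ n * a)]

theorem tendsto_consistentCells (hF : Measurable F) (hmap : ρ.map F = volume.restrict (Ico 0 1))
    {E : Set Ω} (hEmeas : MeasurableSet E) {a b : ℝ}
    (hE : E =ᵐ[ρ] F ⁻¹' Ico a b) (ha : 0 ≤ a) (hab : a ≤ b) (hb : b ≤ 1) :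
    Tendsto (fun n => ((consistentCells ρ F E n).card : ℝ) / 2 ^ n) atTop (nhds (b - a)) ∧
      Tendsto (fun n => ρ ((⋃ k ∈ consistentCells ρ F E n, dyadicCell F n k) ∆ E)) atTop
        (nhds 0) := by
  set m : ℕ → ℝ := fun n => ((consistentCells ρ F E n).card : ℝ) / 2 ^ n
  set U : ℕ → Set Ω := fun n => ⋃ k ∈ consistentCells ρ F E n, dyadicCell F n k
  have hρE := measure_eq_ofReal_of_ae_eq_preimage_Ico hF hmap hE ha hb
  have hρU : ∀ n, ρ (U n) = ENNReal.ofReal (m n) := measure_biUnion_consistentCells hF hmap E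
  have hupper : ∀ n, m n ≤ b - a := fun n => by
    have h := measure_mono_ae (μ := ρ)
      (ae_le_set.mpr (measure_biUnion_consistentCells_sdiff (F := F) E n))
    rwa [hρU, hρE, ENNReal.ofReal_le_ofReal_iff (sub_nonneg.mpr hab)] at h
  have hlower : ∀ n, b - a - 2 / 2 ^ n ≤ m n := fun n => by
    have h2n : (0 : ℝ) < 2 ^ n := by positivity
    rw [le_div_iff₀ h2n, sub_mul, div_mul_cancel₀ _ h2n.ne', mul_comm]
    exact card_consistentCells_ge hF hmap hE ha hb n
  have hsymm : ∀ n, ρ (U n ∆ E) = ENNReal.ofReal (b - a - m n) := fun n => by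
    rw [measure_symmDiff_eq_sub_of_measure_sdiff_eq_zero
      (Finset.measurableSet_biUnion _ fun k _ => measurableSet_dyadicCell hF n k) hEmeas
      (measure_biUnion_consistentCells_sdiff E n) (hρU n ▸ ENNReal.ofReal_ne_top), hρE, hρU]
    exact (ENNReal.ofReal_sub _ (by positivity)).symm
  have hm : Tendsto m atTop (nhds (b - a)) := by
    refine tendsto_of_tendsto_of_tendsto_of_le_of_le ?_ tendsto_const_nhds hlower hupper
    simpa using tendsto_const_nhds.sub ((tendsto_const_nhds (x := (2 : ℝ))).div_atTop
      (tendsto_pow_atTop_atTop_of_one_lt one_lt_two))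
  refine ⟨hm, ?_⟩
  rw [show (fun n => ρ (U n ∆ E)) = _ from funext hsymm]
  simpa using ENNReal.tendsto_ofReal ((tendsto_const_nhds (x := b - a)).sub hm)

theorem Measure.IsAtomless.exists_tendsto_consistentCells [IsProbabilityMeasure ρ]
    (hρ : ρ.IsAtomless) {C : ℕ → Set Ω} (hC : ∀ j, MeasurableSet (C j))
    (hCdisj : Pairwise (Function.onFun Disjoint C)) (hCcover : ⋃ j, C j = univ) :
    ∃ F : Ω → ℝ, Measurable F ∧ ρ.map F = volume.restrict (Ico 0 1) ∧ ∀ j,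
      Tendsto (fun n => ((consistentCells ρ F (C j) n).card : ℝ) / 2 ^ n) atTop
        (nhds (ρ (C j)).toReal) ∧
      Tendsto (fun n => ρ ((⋃ k ∈ consistentCells ρ F (C j) n, dyadicCell F n k) ∆ C j)) atTop
        (nhds 0) := by
  obtain ⟨F, hF, hmap, hCF⟩ := hρ.exists_map_eq_volume_Ico_of_partition hC hCdisj hCcover
  refine ⟨F, hF, hmap, fun j => ?_⟩
  have h := tendsto_consistentCells hF hmap (hC j) (hCF j) (cumulativeMass_nonneg ρ C j)
    (monotone_cumulativeMass ρ C j.le_succ) (cumulativeMass_le_one hC hCdisj hCcover (j + 1))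
  rwa [cumulativeMass_succ, add_sub_cancel_left] at h

end Cells

section WithDensity

variable {μ : Measure Ω} {E' : Type*} [NormedAddCommGroup E'] {ψ : Ω → E'}

theorem setIntegral_norm_sq_eq_toReal_withDensity (hint : Integrable (fun x => ‖ψ x‖ ^ 2) μ)
    {A : Set Ω} (hA : MeasurableSet A) :
    ∫ x in A, ‖ψ x‖ ^ 2 ∂μ = (μ.withDensity (fun x => ‖ψ x‖ₑ ^ 2) A).toReal := by
  rw [withDensity_apply _ hA, integral_eq_lintegral_of_nonneg_ae
    (ae_of_all _ fun x => by positivity) hint.aestronglyMeasurable.restrict]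
  simp_rw [ENNReal.ofReal_pow (norm_nonneg _), ofReal_norm]

theorem eLpNorm_indicator_two_eq_withDensity {S : Set Ω} (hS : MeasurableSet S) :
    eLpNorm (S.indicator ψ) 2 μ = μ.withDensity (fun x => ‖ψ x‖ₑ ^ 2) S ^ (1 / 2 : ℝ) := by
  rw [eLpNorm_indicator_eq_eLpNorm_restrict hS,
    eLpNorm_eq_lintegral_rpow_enorm_toReal two_ne_zero ENNReal.ofNat_ne_top,
    withDensity_apply _ hS]
  simp

theorem tendsto_eLpNorm_indicator_sub_indicator {U : ℕ → Set Ω} {V : Set Ω}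
    (hU : ∀ n, MeasurableSet (U n)) (hV : MeasurableSet V)
    (h : Tendsto (fun n => μ.withDensity (fun x => ‖ψ x‖ₑ ^ 2) (U n ∆ V)) atTop (nhds 0)) :
    Tendsto (fun n => eLpNorm ((U n).indicator ψ - V.indicator ψ) 2 μ) atTop (nhds 0) := by
  simp_rw [eLpNorm_indicator_sub_indicator,
    eLpNorm_indicator_two_eq_withDensity ((hU _).symmDiff hV)]
  have h' := ((ENNReal.continuous_rpow_const (y := (1 / 2 : ℝ))).tendsto 0).comp h
  rwa [ENNReal.zero_rpow_of_pos one_half_pos] at h'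

end WithDensity

end MeasureTheory

theorem born_rule_from_counting_general
    {C : Type*} [MeasurableSpace C] (μ : Measure C)
    (ψ : C → ℂ) (hnorm : ∫ x, ‖ψ x‖ ^ 2 ∂μ = 1)
    (ν : Set C → ℝ) (hν : ∀ A : Set C, ν A = ∫ x in A, ‖ψ x‖ ^ 2 ∂μ)
    (hatomless : ∀ A : Set C, MeasurableSet A → 0 < ν A →
      ∃ B ⊆ A, MeasurableSet B ∧ 0 < ν B ∧ ν B < ν A)
    (Cpart : ℕ → Set C)
    (hCmeas : ∀ j, MeasurableSet (Cpart j))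
    (hCdisj : Pairwise (Function.onFun Disjoint Cpart))
    (hCcover : (⋃ j, Cpart j) = Set.univ) :
    ∃ D : ℕ → ℕ → Set C,
      (∀ n, ∀ k ∈ Finset.Icc 1 (2 ^ n), MeasurableSet (D n k)) ∧
      (∀ n, ∀ k ∈ Finset.Icc 1 (2 ^ n), ∀ l ∈ Finset.Icc 1 (2 ^ n), k ≠ l →
        Disjoint (D n k) (D n l)) ∧
      (∀ n, (⋃ k ∈ Finset.Icc 1 (2 ^ n), D n k) = Set.univ) ∧
      (∀ n, ∀ k ∈ Finset.Icc 1 (2 ^ n), ν (D n k) = (2 ^ n : ℝ)⁻¹) ∧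
      (∀ n, ∀ k ∈ Finset.Icc 1 (2 ^ n),
        D n k = D (n + 1) (2 * k - 1) ∪ D (n + 1) (2 * k)) ∧
      ∀ j,
        Tendsto
          (fun n => ((((Finset.Icc 1 (2 ^ n)).filter
              fun k => ν (D n k \ Cpart j) = 0).card : ℝ) / 2 ^ n))
          atTop (nhds (∫ x in Cpart j, ‖ψ x‖ ^ 2 ∂μ)) ∧
        Tendsto
          (fun n => eLpNorm
            ((fun x => ∑ k ∈ (Finset.Icc 1 (2 ^ n)).filter
                (fun k => ν (D n k \ Cpart j) = 0), (D n k).indicator ψ x)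
              - (Cpart j).indicator ψ) 2 μ)
          atTop (nhds 0) := by
  set ρ := μ.withDensity fun x => ‖ψ x‖ₑ ^ 2
  have hνρ : ∀ A, MeasurableSet A → ν A = (ρ A).toReal := fun A hA =>
    (hν A).trans (setIntegral_norm_sq_eq_toReal_withDensity
      (Integrable.of_integral_ne_zero (hnorm ▸ one_ne_zero)) hA)
  have : IsProbabilityMeasure ρ := ⟨(ENNReal.toReal_eq_one_iff _).mp <| by
    rw [← hνρ _ .univ, hν, Measure.restrict_univ, hnorm]⟩
  obtain ⟨F, hF, hmap, hlim⟩ := (Measure.IsAtomless.of_forall_eq_toReal hνρ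
    hatomless).exists_tendsto_consistentCells hCmeas hCdisj hCcover
  have hM : ∀ j n, ((Finset.Icc 1 (2 ^ n)).filter fun k => ν (dyadicCell F n k \ Cpart j) = 0) =
      consistentCells ρ F (Cpart j) n := fun j n => Finset.filter_congr fun k _ => by
    rw [hνρ _ ((measurableSet_dyadicCell hF n k).diff (hCmeas j)),
      ENNReal.toReal_eq_zero_iff, or_iff_left (measure_ne_top ρ _)]
  refine ⟨dyadicCell F, fun n k _ => measurableSet_dyadicCell hF n k,
    fun n k _ l _ hkl => disjoint_dyadicCell hkl, iUnion_dyadicCell, fun n k hk => ?_,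
    fun n k _ => dyadicCell_eq_union n k, fun j => ?_⟩
  · rw [hνρ _ (measurableSet_dyadicCell hF n k), measure_dyadicCell hF hmap hk,
      ENNReal.toReal_ofReal (by positivity)]
  simp_rw [hM, ← hν, hνρ _ (hCmeas j), ← indicator_biUnion_dyadicCell]
  exact ⟨(hlim j).1, tendsto_eLpNorm_indicator_sub_indicator
    (fun n => Finset.measurableSet_biUnion _ fun k _ => measurableSet_dyadicCell hF n k) (hCmeas j)
    (hlim j).2⟩

/-- Born rule from counting: for a normalized `ψ ∈ L²(C, μ; ℂ)` whose associated measure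
`ν(A) = ∫_A |ψ|² dμ` is atomless, and a countable measurable partition `(C_j)` of `C`,
there are refining partitions of `C` into `2^n` cells of equal weight `2^{-n}` such that,
for each outcome `j`, (a) the fraction of cells consistent with `C_j` converges to the Born
probability `∫_{C_j} |ψ|² dμ`, and (b) the corresponding sum of cell components of `ψ`
converges to `1_{C_j}·ψ` in `L²`. -/
theorem born_rule_from_counting
    {C : Type*} [MeasurableSpace C] (μ : Measure C)
    (ψ : C → ℂ) (hψ : MemLp ψ 2 μ) (hnorm : ∫ x, ‖ψ x‖ ^ 2 ∂μ = 1)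
    (ν : Set C → ℝ) (hν : ∀ A : Set C, ν A = ∫ x in A, ‖ψ x‖ ^ 2 ∂μ)
    (hatomless : ∀ A : Set C, MeasurableSet A → 0 < ν A →
      ∃ B ⊆ A, MeasurableSet B ∧ 0 < ν B ∧ ν B < ν A)
    (Cpart : ℕ → Set C)
    (hCmeas : ∀ j, MeasurableSet (Cpart j))
    (hCdisj : Pairwise (Function.onFun Disjoint Cpart))
    (hCcover : (⋃ j, Cpart j) = Set.univ) :
    ∃ D : ℕ → ℕ → Set C,
      (∀ n, ∀ k ∈ Finset.Icc 1 (2 ^ n), MeasurableSet (D n k)) ∧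
      (∀ n, ∀ k ∈ Finset.Icc 1 (2 ^ n), ∀ l ∈ Finset.Icc 1 (2 ^ n), k ≠ l →
        Disjoint (D n k) (D n l)) ∧
      (∀ n, (⋃ k ∈ Finset.Icc 1 (2 ^ n), D n k) = Set.univ) ∧
      (∀ n, ∀ k ∈ Finset.Icc 1 (2 ^ n), ν (D n k) = (2 ^ n : ℝ)⁻¹) ∧
      (∀ n, ∀ k ∈ Finset.Icc 1 (2 ^ n),
        D n k = D (n + 1) (2 * k - 1) ∪ D (n + 1) (2 * k)) ∧
      ∀ j,
        Tendsto
          (fun n => ((((Finset.Icc 1 (2 ^ n)).filter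
              fun k => ν (D n k \ Cpart j) = 0).card : ℝ) / 2 ^ n))
          atTop (nhds (∫ x in Cpart j, ‖ψ x‖ ^ 2 ∂μ)) ∧
        Tendsto
          (fun n => eLpNorm
            ((fun x => ∑ k ∈ (Finset.Icc 1 (2 ^ n)).filter
                (fun k => ν (D n k \ Cpart j) = 0), (D n k).indicator ψ x)
              - (Cpart j).indicator ψ) 2 μ)
          atTop (nhds 0) :=
  born_rule_from_counting_general μ ψ hnorm ν hν hatomless Cpart hCmeas hCdisj hCcover
end
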